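/- arXiv:1811.06810 — 2 statements merged into one kernel-verified Lean document; each statement's English description precedes it below -/
import Mathlib

section
/- Let R be a join-semilattice whose order is total (a linear order). Then for every type X, every multi-valued selection function ε on X is witnessing. -/
universe u v

/-- A multi-valued selection function `ε : (X → R) → Finset X` (with outcomes in the
join-semilattice `R`) is *witnessing* if for every indexing function
`I : X → Finset (X → R)` (with nonempty values) and every
`x ∈ ε (fun x' => ⋁ {P x' | P ∈ I x'})`, there is a choice function `p` for `I`
(i.e. `p x' ∈ I x'` for all `x'`) with `x ∈ ε (fun x' => p x' x')`. -/
def Witnessing {X : Type u} {R : Type v} [SemilatticeSup R]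
    (ε : (X → R) → Finset X) : Prop :=
  ∀ (I : X → Finset (X → R)) (hI : ∀ x, (I x).Nonempty) (x : X),
    x ∈ ε (fun x' => (I x').sup' (hI x') (fun P => P x')) →
      ∃ p : X → X → R, (∀ x', p x' ∈ I x') ∧ x ∈ ε (fun x' => p x' x')

theorem exists_eq_sup'_of_total {R : Type v} [SemilatticeSup R]
    (htotal : ∀ a b : R, a ≤ b ∨ b ≤ a) {α : Type u} (s : Finset α)
    (hs : s.Nonempty) (f : α → R) : ∃ a ∈ s, s.sup' hs f = f a := by
  induction hs using Finset.Nonempty.cons_induction with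
  | singleton a => exact ⟨a, Finset.mem_singleton_self a, Finset.sup'_singleton f⟩
  | cons a s ha hs ih =>
    obtain ⟨b, hb, hbeq⟩ := ih
    rw [Finset.sup'_cons hs]
    rcases htotal (f a) (s.sup' hs f) with h | h
    · exact ⟨b, Finset.mem_cons_of_mem hb, by rw [sup_eq_right.mpr h, hbeq]⟩
    · exact ⟨a, Finset.mem_cons_self a s, sup_eq_left.mpr h⟩

/-- If the order of the join-semilattice `R` is total, then every multi-valued
selection function `ε` on every type `X` is witnessing. -/
theorem witnessing_of_total {R : Type v} [SemilatticeSup R]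
    (htotal : ∀ a b : R, a ≤ b ∨ b ≤ a)
    {X : Type u} (ε : (X → R) → Finset X) (hε : ∀ k, (ε k).Nonempty) :
    Witnessing ε := by
  intro I hI x hx
  choose p hp hpeq using fun x' =>
    exists_eq_sup'_of_total htotal (I x') (hI x') (fun P => P x')
  refine ⟨p, hp, ?_⟩
  have : (fun x' => p x' x') = fun x' => (I x').sup' (hI x') (fun P => P x') := by
    funext x'
    exact (hpeq x').symm
  rw [this]
  exact hx
end

section
/- With X = Bool, the selection function argmax : (X → ℝ) → Finset X is not upwards closed (with outcome semilattice R = ℝ under max). -/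
universe u

/-- A multi-valued selection function `ε : (X → R) → Finset X` (with outcomes in the
join-semilattice `R`) is *upwards closed* if for every indexing function
`I : X → Finset (X → R)` (with nonempty values), every choice function `p` for `I`,
and every `x ∈ ε (fun x' => p x' x')`, one has
`x ∈ ε (fun x' => ⋁ {P x' | P ∈ I x'})`. -/
def UpwardsClosed {X : Type u} {R : Type} [SemilatticeSup R]
    (ε : (X → R) → Finset X) : Prop :=
  ∀ (I : X → Finset (X → R)) (hI : ∀ x, (I x).Nonempty) (p : X → X → R),
    (∀ x', p x' ∈ I x') → ∀ x, x ∈ ε (fun x' => p x' x') →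
      x ∈ ε (fun x' => (I x').sup' (hI x') (fun P => P x'))

/-- `argmax k = {x | ∀ x', k x ≥ k x'}`. -/
noncomputable def argmax {X : Type u} [Fintype X] (k : X → ℝ) : Finset X :=
  Finset.univ.filter (fun x => ∀ x', k x' ≤ k x)

/-- With `X = Bool`, the selection function `argmax : (X → ℝ) → Finset X` is not
upwards closed (with outcome semilattice `ℝ` under `max`). -/
theorem argmax_not_upwardsClosed : ¬ UpwardsClosed (argmax (X := Bool)) := by
  intro h
  classical
  set f : Bool → ℝ := fun _ => 0 with hf
  set g : Bool → ℝ := fun _ => 1 with hg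
  set I : Bool → Finset (Bool → ℝ) := fun b => if b then {f, g} else {f} with hI
  have hne : ∀ b, (I b).Nonempty := by
    intro b; cases b <;> simp [hI]
  have hp : ∀ b, (fun _ => f) b ∈ I b := by
    intro b; cases b <;> simp [hI]
  have hmem : false ∈ argmax (X := Bool) (fun x' => (fun _ => f) x' x') := by
    simp [argmax, hf]
  have := h I hne (fun _ => f) hp false hmem
  have hsup : ∀ b, (I b).sup' (hne b) (fun P => P b) = if b then 1 else 0 := by
    intro b
    cases b <;> simp [hI, hf, hg]
  simp only [argmax, Finset.mem_filter] at this
  have h2 := this.2 true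
  rw [hsup, hsup] at h2
  norm_num at h2
end
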